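/- arXiv:2111.15088 — 6 statements merged into one kernel-verified Lean document; each statement's English description precedes it below -/
import Mathlib

section
/- For θ = (θ₁, θ₂) with each θᵢ ∈ [-π/2, 3π/2), let ã(θ) = (h²/9)(4 + 2cos θ₁ + 2cos θ₂ + cos θ₁ cos θ₂) and 1/â(θ) = (4 - 2cos θ₁ - 2cos θ₂)/h². Then the function g(θ) = ã(θ)/â(θ) = (1/9)(4 + 2cos θ₁ + 2cos θ₂ + cos θ₁ cos θ₂)(4 - 2cos θ₁ - 2cos θ₂), restricted to the high-frequency set T^high = [-π/2, 3π/2)² \ [-π/2, π/2)², takes values exactly in the interval [8/9, 16/9]. -/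
open Real Set

noncomputable def Thigh : Set (ℝ × ℝ) :=
  (Ico (-(π/2)) (3*π/2) ×ˢ Ico (-(π/2)) (3*π/2)) \
  (Ico (-(π/2)) (π/2) ×ˢ Ico (-(π/2)) (π/2))

lemma key_ub (x y : ℝ) (hx1 : -1 ≤ x) (hx2 : x ≤ 1) (hy1 : -1 ≤ y) (hy2 : y ≤ 1) :
    (4 + 2*x + 2*y + x*y) * (4 - 2*x - 2*y) ≤ 16 := by
  nlinarith [sq_nonneg (x+y), sq_nonneg (x-y), mul_nonneg (mul_nonneg (sub_nonneg.2 hx2) (sub_nonneg.2 hy2)) (sub_nonneg.2 (by linarith : (-2:ℝ) ≤ x + y)),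
    mul_nonneg (mul_nonneg (by linarith : (0:ℝ) ≤ 1 + x) (by linarith : (0:ℝ) ≤ 1 + y)) (by linarith : (0:ℝ) ≤ 2 - x - y),
    sq_nonneg (x*y), sq_nonneg (x + y + x*y)]

lemma key_lb (x y : ℝ) (hx1 : -1 ≤ x) (hx2 : x ≤ 1) (hy1 : -1 ≤ y) (hy2 : y ≤ 0) :
    8 ≤ (4 + 2*x + 2*y + x*y) * (4 - 2*x - 2*y) := by
  nlinarith [mul_nonneg (mul_nonneg (by linarith : (0:ℝ) ≤ 1 + x) (by linarith : (0:ℝ) ≤ 1 + y)) (by linarith : (0:ℝ) ≤ -y),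
    mul_nonneg (mul_nonneg (by linarith : (0:ℝ) ≤ 1 - x) (by linarith : (0:ℝ) ≤ 1 + y)) (by linarith : (0:ℝ) ≤ -y),
    mul_nonneg (mul_nonneg (by linarith : (0:ℝ) ≤ 1 + x) (by linarith : (0:ℝ) ≤ 1 + y)) (by linarith : (0:ℝ) ≤ 1 - x),
    mul_nonneg (by linarith : (0:ℝ) ≤ 1 + x) (by linarith : (0:ℝ) ≤ 1 + y),
    sq_nonneg (x + y), sq_nonneg (x - y), sq_nonneg (1 + y)]

/-- The product of the Q1 mass symbol and the five-point Laplacian symbol takes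
values exactly in [8/9, 16/9] on the high-frequency set. -/
theorem stmt0 (h : ℝ) (hh : 0 < h) :
    (fun θ : ℝ × ℝ =>
      (h^2/9 * (4 + 2*cos θ.1 + 2*cos θ.2 + cos θ.1 * cos θ.2)) *
      ((4 - 2*cos θ.1 - 2*cos θ.2)/h^2)) '' Thigh = Icc (8/9) (16/9) := by
  have hπ := Real.pi_gt_three
  have hne : h ^ 2 ≠ 0 := by positivity
  have hsimp : ∀ θ : ℝ × ℝ,
      (h^2/9 * (4 + 2*cos θ.1 + 2*cos θ.2 + cos θ.1 * cos θ.2)) *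
      ((4 - 2*cos θ.1 - 2*cos θ.2)/h^2) =
      ((4 + 2*cos θ.1 + 2*cos θ.2 + cos θ.1 * cos θ.2) *
        (4 - 2*cos θ.1 - 2*cos θ.2)) / 9 := by
    intro θ; field_simp
  apply Subset.antisymm
  · rintro _ ⟨θ, hθ, rfl⟩
    obtain ⟨⟨⟨h1l, h1r⟩, h2l, h2r⟩, hlow⟩ := hθ
    beta_reduce
    rw [hsimp θ]
    have hx1 := Real.neg_one_le_cos θ.1
    have hx2 := Real.cos_le_one θ.1
    have hy1 := Real.neg_one_le_cos θ.2
    have hy2 := Real.cos_le_one θ.2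
    have hneg : cos θ.1 ≤ 0 ∨ cos θ.2 ≤ 0 := by
      by_contra hc
      push_neg at hc
      apply hlow
      simp only [mem_prod, mem_Ico] at *
      constructor
      · refine ⟨h1l, ?_⟩
        by_contra hlt
        push_neg at hlt
        have : cos θ.1 ≤ 0 := Real.cos_nonpos_of_pi_div_two_le_of_le hlt (by linarith)
        linarith [hc.1]
      · refine ⟨h2l, ?_⟩
        by_contra hlt
        push_neg at hlt
        have : cos θ.2 ≤ 0 := Real.cos_nonpos_of_pi_div_two_le_of_le hlt (by linarith)
        linarith [hc.2]
    constructor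
    · rcases hneg with hn | hn
      · have := key_lb (cos θ.2) (cos θ.1) hy1 hy2 hx1 hn
        nlinarith
      · have := key_lb (cos θ.1) (cos θ.2) hx1 hx2 hy1 hn
        linarith
    · have := key_ub (cos θ.1) (cos θ.2) hx1 hx2 hy1 hy2
      linarith
  · intro v hv
    set F := fun θ : ℝ × ℝ =>
      (h^2/9 * (4 + 2*cos θ.1 + 2*cos θ.2 + cos θ.1 * cos θ.2)) *
      ((4 - 2*cos θ.1 - 2*cos θ.2)/h^2) with hF
    rcases le_or_gt v (12/9) with hc | hc
    · -- path (t, π), t ∈ [π/2, π]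
      have hcont : ContinuousOn (fun t : ℝ => F (t, π)) (Icc (π/2) π) := by
        apply Continuous.continuousOn
        fun_prop
      have hiv := intermediate_value_Icc' (by linarith : π/2 ≤ π) hcont
      have hfa : F (π/2, π) = 12/9 := by
        simp only [hF, Real.cos_pi_div_two, Real.cos_pi]
        field_simp
        ring
      have hfb : F (π, π) = 8/9 := by
        simp only [hF, Real.cos_pi]
        field_simp
        ring
      rw [hfa, hfb] at hiv
      obtain ⟨t, ht, hft⟩ := hiv ⟨hv.1, hc⟩
      refine ⟨(t, π), ?_, hft⟩
      constructor
      · exact ⟨⟨by linarith [ht.1], by linarith [ht.2]⟩, ⟨by linarith, by linarith⟩⟩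
      · rintro ⟨⟨-, ht2⟩, -⟩
        exact absurd ht2 (not_lt.2 ht.1)
    · -- path (π/2, t), t ∈ [π/2, π]
      have hcont : ContinuousOn (fun t : ℝ => F (π/2, t)) (Icc (π/2) π) := by
        apply Continuous.continuousOn
        fun_prop
      have hiv := intermediate_value_Icc' (by linarith : π/2 ≤ π) hcont
      have hfa : F (π/2, π/2) = 16/9 := by
        simp only [hF, Real.cos_pi_div_two]
        field_simp
        ring
      have hfb : F (π/2, π) = 12/9 := by
        simp only [hF, Real.cos_pi_div_two, Real.cos_pi]
        field_simp
        ring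
      rw [hfa, hfb] at hiv
      obtain ⟨t, ht, hft⟩ := hiv ⟨by linarith, hv.2⟩
      refine ⟨(π/2, t), ?_, hft⟩
      constructor
      · exact ⟨⟨by linarith, by linarith⟩, ⟨by linarith [ht.1], by linarith [ht.2]⟩⟩
      · rintro ⟨⟨-, ht1⟩, -⟩
        exact absurd ht1 (lt_irrefl _)
end

section
/- Define g(θ₁, θ₂) = (1/9)(4 + 2cos θ₁ + 2cos θ₂ + cos θ₁ cos θ₂)(4 - 2cos θ₁ - 2cos θ₂). Then the minimum over ω ∈ ℝ of the supremum over θ ∈ T^high of |1 - ω·g(θ)| equals 1/3, and this minimum is uniquely achieved at ω = 3/4. -/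
open Real Set

noncomputable def g (θ : ℝ × ℝ) : ℝ :=
  1/9 * (4 + 2*cos θ.1 + 2*cos θ.2 + cos θ.1 * cos θ.2) * (4 - 2*cos θ.1 - 2*cos θ.2)

noncomputable def μ (ω : ℝ) : ℝ := sSup ((fun θ => |1 - ω * g θ|) '' Thigh)

lemma key (x y : ℝ) (hx1 : -1 ≤ x) (hx2 : x ≤ 1) (hy1 : -1 ≤ y) (hy2 : y ≤ 0) :
    8 ≤ (4+2*x+2*y+x*y)*(4-2*x-2*y) ∧ (4+2*x+2*y+x*y)*(4-2*x-2*y) ≤ 16 := by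
  have a : (0:ℝ) ≤ x+1 := by linarith
  have b : (0:ℝ) ≤ 1-x := by linarith
  have c : (0:ℝ) ≤ -y := by linarith
  have d : (0:ℝ) ≤ y+1 := by linarith
  constructor
  · nlinarith [mul_nonneg a c, mul_nonneg b c, mul_nonneg a d, mul_nonneg b d,
      mul_nonneg (mul_nonneg a a) c, mul_nonneg (mul_nonneg b b) c,
      mul_nonneg (mul_nonneg a d) d, mul_nonneg (mul_nonneg b d) d,
      mul_nonneg (mul_nonneg a b) c, mul_nonneg (mul_nonneg a b) d,
      mul_nonneg (mul_nonneg a c) d, mul_nonneg (mul_nonneg b c) d,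
      sq_nonneg (x+y), sq_nonneg (x-y), sq_nonneg (x+y+2)]
  · nlinarith [mul_nonneg a c, mul_nonneg b c, mul_nonneg a d, mul_nonneg b d,
      mul_nonneg (mul_nonneg a a) c, mul_nonneg (mul_nonneg b b) c,
      mul_nonneg (mul_nonneg a b) c, mul_nonneg (mul_nonneg a c) c,
      mul_nonneg (mul_nonneg b c) c, sq_nonneg (x+y), sq_nonneg (x-y), sq_nonneg (x*y)]

lemma g_bounds {θ : ℝ × ℝ} (hθ : θ ∈ Thigh) : 8/9 ≤ g θ ∧ g θ ≤ 16/9 := by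
  obtain ⟨⟨h1, h2⟩, h3⟩ := hθ
  set x := cos θ.1
  set y := cos θ.2
  have hx1 : -1 ≤ x := neg_one_le_cos _
  have hx2 : x ≤ 1 := cos_le_one _
  have hy1 : -1 ≤ y := neg_one_le_cos _
  have hy2 : y ≤ 1 := cos_le_one _
  have hxy : x ≤ 0 ∨ y ≤ 0 := by
    rw [mem_prod, not_and_or] at h3
    rcases h3 with h | h
    · left
      rw [mem_Ico, not_and_or] at h; push_neg at h
      have hle : π/2 ≤ θ.1 := by
        rcases h with h | h
        · linarith [h1.1]
        · exact h
      exact cos_nonpos_of_pi_div_two_le_of_le hle (by linarith [h1.2, pi_pos])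
    · right
      rw [mem_Ico, not_and_or] at h; push_neg at h
      have hle : π/2 ≤ θ.2 := by
        rcases h with h | h
        · linarith [h2.1]
        · exact h
      exact cos_nonpos_of_pi_div_two_le_of_le hle (by linarith [h2.2, pi_pos])
  have key' : 8 ≤ (4+2*x+2*y+x*y)*(4-2*x-2*y) ∧ (4+2*x+2*y+x*y)*(4-2*x-2*y) ≤ 16 := by
    rcases hxy with h | h
    · have := key y x hy1 hy2 hx1 h
      constructor <;> nlinarith [this.1, this.2]
    · exact key x y hx1 hx2 hy1 h
  unfold g
  constructor <;> nlinarith [key'.1, key'.2]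

lemma mem_pp : ((π, π) : ℝ × ℝ) ∈ Thigh := by
  have hπ := pi_pos
  constructor
  · exact ⟨⟨by linarith, by linarith⟩, ⟨by linarith, by linarith⟩⟩
  · intro h
    have := h.1.2
    simp only at this
    linarith
lemma mem_hh : ((π/2, π/2) : ℝ × ℝ) ∈ Thigh := by
  have hπ := pi_pos
  constructor
  · exact ⟨⟨by linarith, by linarith⟩, ⟨by linarith, by linarith⟩⟩
  · intro h
    have := h.1.2
    simp only at this
    linarith

lemma g_pp : g (π, π) = 8/9 := by simp [g, Real.cos_pi]; ring
lemma g_hh : g (π/2, π/2) = 16/9 := by simp [g, Real.cos_pi_div_two]; norm_num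

lemma bdd (ω : ℝ) : BddAbove ((fun θ => |1 - ω * g θ|) '' Thigh) := by
  refine ⟨1 + |ω| * (16/9), ?_⟩
  rintro _ ⟨θ, hθ, rfl⟩
  have hg := g_bounds hθ
  have : |1 - ω * g θ| ≤ |1| + |ω * g θ| := abs_sub _ _
  have h2 : |ω * g θ| = |ω| * |g θ| := abs_mul _ _
  have h3 : |g θ| ≤ 16/9 := abs_le.2 ⟨by linarith [hg.1], hg.2⟩
  have h4 : |ω| * |g θ| ≤ |ω| * (16/9) := by
    exact mul_le_mul_of_nonneg_left h3 (abs_nonneg ω)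
  simp only [abs_one] at this
  linarith

lemma mu_ge (ω : ℝ) : |1 - ω * (8/9)| ≤ μ ω ∧ |1 - ω * (16/9)| ≤ μ ω := by
  constructor
  · have := le_csSup (bdd ω) (mem_image_of_mem _ mem_pp)
    rwa [g_pp] at this
  · have := le_csSup (bdd ω) (mem_image_of_mem _ mem_hh)
    rwa [g_hh] at this

/-- min over ω of sup over θ ∈ T^high of |1 - ω g(θ)| is 1/3, uniquely at ω = 3/4. -/
theorem stmt1 :
    μ (3/4) = 1/3 ∧ ∀ ω : ℝ, 1/3 ≤ μ ω ∧ (μ ω = 1/3 → ω = 3/4) := by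
  have hmu34 : μ (3/4) = 1/3 := by
    apply le_antisymm
    · apply csSup_le
      · exact ⟨_, mem_image_of_mem _ mem_pp⟩
      · rintro _ ⟨θ, hθ, rfl⟩
        have hg := g_bounds hθ
        rw [abs_le]
        constructor <;> nlinarith [hg.1, hg.2]
    · have := (mu_ge (3/4)).1
      have h : |1 - (3/4 : ℝ) * (8/9)| = 1/3 := by norm_num
      linarith [h ▸ this]
  refine ⟨hmu34, fun ω => ?_⟩
  obtain ⟨h1, h2⟩ := mu_ge ω
  have ha := abs_le.1 (le_refl |1 - ω * (8/9)|)
  have hb := le_abs_self (1 - ω * (8/9))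
  have hb' := neg_abs_le (1 - ω * (8/9))
  have hc := le_abs_self (1 - ω * (16/9))
  have hc' := neg_abs_le (1 - ω * (16/9))
  constructor
  · by_contra h
    push_neg at h
    have e1 : |1 - ω * (8/9)| < 1/3 := lt_of_le_of_lt h1 h
    have e2 : |1 - ω * (16/9)| < 1/3 := lt_of_le_of_lt h2 h
    rw [abs_lt] at e1 e2
    linarith [e1.1, e2.2]
  · intro h
    have e1 : |1 - ω * (8/9)| ≤ 1/3 := h ▸ h1
    have e2 : |1 - ω * (16/9)| ≤ 1/3 := h ▸ h2
    rw [abs_le] at e1 e2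
    linarith [e1.1, e2.2]
end

section
/- Let a, â, b be nonzero real numbers and β > 0, and let L = [[2βa, 0, -a], [0, a, b], [-a, b, 0]] and K = [[2βâ, 0, -a], [0, â, b], [-a, b, 0]] be 3×3 real matrices. Then det(L - λK) = (1-λ)²(a - λâ)(-2βb² - a²), and consequently the eigenvalues of K⁻¹L are 1 (with multiplicity 2) and a/â. -/
open Matrix Polynomial

lemma my_eval_charpoly (M : Matrix (Fin 3) (Fin 3) ℝ) (x : ℝ) :
    M.charpoly.eval x = (x • (1 : Matrix (Fin 3) (Fin 3) ℝ) - M).det := by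
  rw [Matrix.charpoly, ← coe_evalRingHom, RingHom.map_det]
  congr 1
  ext i j
  by_cases h : i = j
  · subst h; simp [charmatrix_apply_eq, Matrix.one_apply]
  · simp [charmatrix_apply_ne _ _ _ h, Matrix.one_apply, h]

/-- The determinant identity for the BSR symbols, and the eigenvalues of K⁻¹L
are 1 (multiplicity 2) and a/â, expressed via the characteristic polynomial. -/
theorem stmt4 (a ahat b β : ℝ) (ha : a ≠ 0) (hahat : ahat ≠ 0) (hb : b ≠ 0)
    (hβ : 0 < β) (hdet : 2*β*b^2 + a^2 ≠ 0)
    (L K : Matrix (Fin 3) (Fin 3) ℝ)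
    (hL : L = !![2*β*a, 0, -a; 0, a, b; -a, b, 0])
    (hK : K = !![2*β*ahat, 0, -a; 0, ahat, b; -a, b, 0]) :
    (∀ l : ℝ, (L - l • K).det = (1 - l)^2 * (a - l*ahat) * (-(2*β*b^2) - a^2)) ∧
    (K⁻¹ * L).charpoly = (X - 1)^2 * (X - C (a/ahat)) := by
  subst hL hK
  have hdK : (!![2*β*ahat, 0, -a; 0, ahat, b; -a, b, 0] : Matrix (Fin 3) (Fin 3) ℝ).det
      = -(ahat * (2*β*b^2 + a^2)) := by
    simp [Matrix.det_fin_three]; ring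
  have hdK0 : (!![2*β*ahat, 0, -a; 0, ahat, b; -a, b, 0] : Matrix (Fin 3) (Fin 3) ℝ).det ≠ 0 := by
    rw [hdK]; exact neg_ne_zero.mpr (mul_ne_zero hahat hdet)
  constructor
  · intro l
    simp [Matrix.det_fin_three, Matrix.sub_apply, Matrix.smul_apply]
    ring
  · apply Polynomial.funext
    intro x
    rw [my_eval_charpoly]
    have hmul : x • (1 : Matrix (Fin 3) (Fin 3) ℝ) - (!![2*β*ahat, 0, -a; 0, ahat, b; -a, b, 0])⁻¹ * !![2*β*a, 0, -a; 0, a, b; -a, b, 0]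
        = (!![2*β*ahat, 0, -a; 0, ahat, b; -a, b, 0])⁻¹ *
          (x • !![2*β*ahat, 0, -a; 0, ahat, b; -a, b, 0] - !![2*β*a, 0, -a; 0, a, b; -a, b, 0]) := by
      rw [Matrix.mul_sub, Matrix.mul_smul, Matrix.nonsing_inv_mul _ (isUnit_iff_ne_zero.mpr hdK0)]
    rw [hmul, Matrix.det_mul, Matrix.det_nonsing_inv]
    have hd2 : (x • !![2*β*ahat, 0, -a; 0, ahat, b; -a, b, 0] - !![2*β*a, 0, -a; 0, a, b; -a, b, 0] : Matrix (Fin 3) (Fin 3) ℝ).det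
        = -((1 - x)^2 * (a - x*ahat) * (-(2*β*b^2) - a^2)) := by
      simp [Matrix.det_fin_three, Matrix.sub_apply, Matrix.smul_apply]
      ring
    rw [hd2, Ring.inverse_eq_inv', hdK]
    simp only [eval_mul, eval_pow, eval_sub, eval_one, eval_X, eval_C]
    field_simp
    ring
end

section
/- Define g(θ₁, θ₂) = (1/9)(4 + 2cos θ₁ + 2cos θ₂ + cos θ₁ cos θ₂)(4 - 2cos θ₁ - 2cos θ₂). Then min over ω ∈ ℝ of max{ |1 - ω|, sup_{θ ∈ T^high} |1 - ω·g(θ)| } = 1/3, attained at ω = 3/4. -/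
open Real Set

noncomputable def μB (ω : ℝ) : ℝ :=
  max |1 - ω| (sSup ((fun θ => |1 - ω * g θ|) '' Thigh))

lemma aux_arith (a b : ℝ) (ha : -1 ≤ a) (ha' : a ≤ 1) (hb : -1 ≤ b) (hb' : b ≤ 1)
    (h : b ≤ 0) :
    8 ≤ (4+2*a+2*b+a*b)*(4-2*a-2*b) ∧ (4+2*a+2*b+a*b)*(4-2*a-2*b) ≤ 16 := by
  constructor
  · nlinarith [sq_nonneg (a+b), sq_nonneg (a-b), sq_nonneg (1+a), sq_nonneg (1+b),
      mul_nonneg (by linarith : (0:ℝ) ≤ 1+a) (by linarith : (0:ℝ) ≤ 1+b),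
      mul_nonneg (by linarith : (0:ℝ) ≤ 1-a) (by linarith : (0:ℝ) ≤ -b),
      mul_nonneg (mul_nonneg (by linarith : (0:ℝ) ≤ 1+a) (by linarith : (0:ℝ) ≤ 1+b)) (by linarith : (0:ℝ) ≤ -b),
      mul_nonneg (mul_nonneg (by linarith : (0:ℝ) ≤ 1+a) (by linarith : (0:ℝ) ≤ 1+b)) (by linarith : (0:ℝ) ≤ 1-a)]
  · nlinarith [sq_nonneg (a+b), sq_nonneg (a-b), sq_nonneg a, sq_nonneg b,
      mul_nonneg (by linarith : (0:ℝ) ≤ 1+a) (by linarith : (0:ℝ) ≤ -b),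
      mul_nonneg (by linarith : (0:ℝ) ≤ 1-a) (by linarith : (0:ℝ) ≤ -b),
      mul_nonneg (mul_nonneg (by linarith : (0:ℝ) ≤ 1+a) (by linarith : (0:ℝ) ≤ 1+b)) (by linarith : (0:ℝ) ≤ -b)]

lemma memThighPi : ((π:ℝ), π) ∈ Thigh := by
  have := pi_pos
  constructor
  · exact ⟨⟨by linarith, by linarith⟩, ⟨by linarith, by linarith⟩⟩
  · intro h
    have := h.1.2
    simp only [Set.mem_Ico] at this ⊢
    linarith
lemma memThighPi2 : ((π/2:ℝ), π/2) ∈ Thigh := by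
  have := pi_pos
  constructor
  · exact ⟨⟨by linarith, by linarith⟩, ⟨by linarith, by linarith⟩⟩
  · intro h
    have := h.1.2
    simp only [Set.mem_Ico] at this ⊢
    linarith

lemma g_pi : g ((π:ℝ), π) = 8/9 := by
  simp [g, Real.cos_pi]; norm_num

lemma g_pi2 : g ((π/2:ℝ), π/2) = 16/9 := by
  simp [g, Real.cos_pi_div_two]; norm_num

/-- Optimal smoothing factor for exact stiffness-based BSR:
min over ω of max{|1-ω|, sup |1-ω g(θ)|} = 1/3, attained at ω = 3/4. -/
theorem stmt5 :
    μB (3/4) = 1/3 ∧ ∀ ω : ℝ, 1/3 ≤ μB ω := by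
  constructor
  · unfold μB
    have hsup : sSup ((fun θ => |1 - (3/4) * g θ|) '' Thigh) = 1/3 := by
      apply le_antisymm
      · apply csSup_le ⟨_, Set.mem_image_of_mem _ memThighPi⟩
        rintro x ⟨θ, hθ, rfl⟩
        obtain ⟨h1, h2⟩ := g_bounds hθ
        rw [abs_le]
        constructor <;> linarith
      · have : (1/3 : ℝ) = |1 - (3/4) * g ((π:ℝ), π)| := by
          rw [g_pi, show (1:ℝ) - 3/4*(8/9) = 1/3 by norm_num, abs_of_nonneg (by norm_num)]
        rw [this]
        exact le_csSup (bdd _) (Set.mem_image_of_mem _ memThighPi)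
    rw [hsup]
    rw [max_eq_right]
    · rw [abs_le]; constructor <;> norm_num
  · intro ω
    have h1 : |1 - ω * (8/9)| ≤ sSup ((fun θ => |1 - ω * g θ|) '' Thigh) := by
      have : |1 - ω * (8/9)| = |1 - ω * g ((π:ℝ), π)| := by rw [g_pi]
      rw [this]
      exact le_csSup (bdd ω) (Set.mem_image_of_mem _ memThighPi)
    have h2 : |1 - ω * (16/9)| ≤ sSup ((fun θ => |1 - ω * g θ|) '' Thigh) := by
      have : |1 - ω * (16/9)| = |1 - ω * g ((π/2:ℝ), π/2)| := by rw [g_pi2]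
      rw [this]
      exact le_csSup (bdd ω) (Set.mem_image_of_mem _ memThighPi2)
    have h3 : 1/3 ≤ sSup ((fun θ => |1 - ω * g θ|) '' Thigh) := by
      have a1 := le_abs_self (1 - ω * (8/9))
      have a2 := neg_abs_le (1 - ω * (16/9))
      linarith
    exact le_trans h3 (le_max_right _ _)
end

section
/- For a single real parameter ω, min over ω of max( |1 - ω|, |1 - (1/4)ω|, |1 - (3/2)ω| ) = 5/7, attained at ω = 8/7 = 2/(1/4 + 3/2). -/
/-- min over ω of max(|1-ω|, |1-(1/4)ω|, |1-(3/2)ω|) = 5/7, attained at ω = 8/7. -/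
theorem stmt10 :
    max |1 - (8/7 : ℝ)| (max |1 - (1/4 : ℝ) * (8/7)| |1 - (3/2 : ℝ) * (8/7)|) = 5/7 ∧
    (8/7 : ℝ) = 2 / (1/4 + 3/2) ∧
    ∀ ω : ℝ, 5/7 ≤ max |1 - ω| (max |1 - (1/4) * ω| |1 - (3/2) * ω|) := by
  refine ⟨?_, by norm_num, ?_⟩
  · rw [show |1 - (8/7 : ℝ)| = 1/7 by rw [abs_of_nonpos] <;> norm_num,
      show |1 - (1/4 : ℝ) * (8/7)| = 5/7 by rw [abs_of_nonneg] <;> norm_num,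
      show |1 - (3/2 : ℝ) * (8/7)| = 5/7 by rw [abs_of_nonpos] <;> norm_num]
    norm_num
  · intro ω
    rcases le_total ω (8/7) with h | h
    · refine le_trans ?_ (le_max_of_le_right (le_max_left _ _))
      rw [le_abs]; left; linarith
    · refine le_trans ?_ (le_max_of_le_right (le_max_right _ _))
      rw [le_abs]; right; linarith
end

section
/- Let a > 0, b ∈ ℝ, â > 0, β > 0, ω ∈ ℝ, and let S = I - ω K⁻¹ L where L = [[2βa, 0, -a],[0, a, b],[-a, b, 0]] and K = [[2βâ, 0, -a],[0, â, b],[-a, b, 0]]. Then the spectrum of S is {1 - ω, 1 - ω·(a/â)}, with 1 - ω having algebraic multiplicity 2. -/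
open Matrix Polynomial

lemma eval_charpoly_aux {n : Type*} [Fintype n] [DecidableEq n] (A : Matrix n n ℝ) (x : ℝ) :
    eval x A.charpoly = det (x • (1 : Matrix n n ℝ) - A) := by
  rw [Matrix.charpoly, ← Polynomial.coe_evalRingHom, RingHom.map_det]
  congr 1
  ext i j
  by_cases h : i = j
  · subst h; simp [charmatrix_apply_eq]
  · simp [charmatrix_apply_ne _ _ _ h, Matrix.one_apply_ne h]

/-- The spectrum of the stiffness-based BSR error-propagation symbol
S = I - ω K⁻¹L is {1-ω, 1-ω a/â}, with 1-ω of algebraic multiplicity 2. -/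
theorem stmt15 (a ahat b β ω : ℝ) (ha : 0 < a) (hahat : 0 < ahat) (hβ : 0 < β)
    (L K : Matrix (Fin 3) (Fin 3) ℝ)
    (hL : L = !![2*β*a, 0, -a; 0, a, b; -a, b, 0])
    (hK : K = !![2*β*ahat, 0, -a; 0, ahat, b; -a, b, 0])
    (S : Matrix (Fin 3) (Fin 3) ℝ) (hS : S = 1 - ω • (K⁻¹ * L)) :
    spectrum ℝ S = {1 - ω, 1 - ω * (a/ahat)} ∧
    S.charpoly = (X - C (1 - ω))^2 * (X - C (1 - ω * (a/ahat))) := by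
  set D : ℝ := ahat * (2*β*b^2 + a^2) with hDdef
  have hD : D ≠ 0 := by positivity
  have hdet : K.det = -D := by
    subst hK; rw [det_fin_three]; simp; ring
  have hKu : IsUnit K.det := by
    rw [hdet]; exact isUnit_iff_ne_zero.2 (by simpa using hD)
  set M : Matrix (Fin 3) (Fin 3) ℝ :=
    !![(2*β*a*b^2 + ahat*a^2)/D, -(a*b*(ahat-a))/D, 0;
       -(2*β*a*b*(ahat-a))/D, (a^3 + 2*β*ahat*b^2)/D, 0;
       (2*β*ahat*a*(ahat-a))/D, -(2*β*ahat*b*(ahat-a))/D, 1] with hMdef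
  have hKM : K * M = L := by
    subst hK hL
    ext i j
    fin_cases i <;> fin_cases j <;>
      simp [hMdef, Matrix.mul_apply, Fin.sum_univ_three] <;>
      (try field_simp) <;> try ring
  have hM : K⁻¹ * L = M := by
    rw [← hKM, ← Matrix.mul_assoc, Matrix.nonsing_inv_mul K hKu, Matrix.one_mul]
  have hSex : S = !![1 - ω*((2*β*a*b^2 + ahat*a^2)/D), ω*((a*b*(ahat-a))/D), 0;
       ω*((2*β*a*b*(ahat-a))/D), 1 - ω*((a^3 + 2*β*ahat*b^2)/D), 0;
       -(ω*((2*β*ahat*a*(ahat-a))/D)), ω*((2*β*ahat*b*(ahat-a))/D), 1 - ω] := by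
    rw [hS, hM, hMdef]
    ext i j
    fin_cases i <;> fin_cases j <;>
      simp [Matrix.one_apply] <;> ring
  have key : ∀ x : ℝ, det (x • (1 : Matrix (Fin 3) (Fin 3) ℝ) - S)
      = (x - (1 - ω))^2 * (x - (1 - ω * (a/ahat))) := by
    intro x
    rw [hSex, det_fin_three]
    simp [Matrix.one_apply]
    field_simp
    ring
  constructor
  · ext μ
    rw [spectrum.mem_iff, Matrix.isUnit_iff_isUnit_det, isUnit_iff_ne_zero, not_not,
      Algebra.algebraMap_eq_smul_one, key μ]
    simp only [Set.mem_insert_iff, Set.mem_singleton_iff]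
    constructor
    · intro h
      rcases mul_eq_zero.1 h with h | h
      · have h2 := pow_eq_zero_iff (n := 2) (by norm_num) |>.1 h
        left; linarith [sub_eq_zero.1 h2]
      · right; linarith [sub_eq_zero.1 h]
    · rintro (h | h) <;> rw [h] <;> ring
  · apply Polynomial.funext
    intro x
    rw [eval_charpoly_aux S x, key x]
    simp [eval_mul, eval_pow]
end
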